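/- Let f ∈ L²(ℝⁿ) with |x|^m f ∈ L²(ℝⁿ) where m = ⌊n/2⌋ + 1, let 1 ≤ j ≤ m, and let 2 < p < 2n/(n−2j) (interpreted as 2 < p < ∞ if n ≤ 2j). Then with p′ the conjugate exponent, ‖ |x|^{m−j} f ‖_{L^{p′}} ≲ ‖f‖_{L²} + ‖ |x|^m f ‖_{L²}, with implicit constant depending only on n, j, p. -/

import Mathlib

open MeasureTheory Metric Set Module
open scoped ENNReal

/-!
With `q = 2p/(p-2)` one has `1/p' = 1/q + 1/2`, so Hölder's inequality bounds `‖w • g‖_{p'}` by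
`‖w‖_q ‖g‖_2`. Split at the unit sphere: on the ball `|x|^(m-j) ≤ 1`, and outside it
`|x|^(m-j) = |x|^(-j) |x|^m` where `|x|^(-j)` is `q`-integrable because `j q > n`.
-/

section Holder

variable {α E F G : Type*} [MeasurableSpace α] {μ : Measure α}
  [NormedAddCommGroup E] [NormedAddCommGroup F] [NormedAddCommGroup G]

theorem eLpNorm_le_mul_add_mul_of_norm_le {p q r : ℝ≥0∞} [p.HolderTriple q r] (hr : 1 ≤ r)
    {g : α → E} {w₁ w₂ : α → F} {f₁ f₂ : α → G}
    (hw₁ : AEStronglyMeasurable w₁ μ) (hw₂ : AEStronglyMeasurable w₂ μ)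
    (hf₁ : AEStronglyMeasurable f₁ μ) (hf₂ : AEStronglyMeasurable f₂ μ)
    (hg : ∀ x, ‖g x‖ ≤ ‖w₁ x‖ * ‖f₁ x‖ + ‖w₂ x‖ * ‖f₂ x‖) :
    eLpNorm g r μ ≤ eLpNorm w₁ p μ * eLpNorm f₁ q μ + eLpNorm w₂ p μ * eLpNorm f₂ q μ := by
  have holder : ∀ {w : α → F} {f : α → G}, AEStronglyMeasurable w μ → AEStronglyMeasurable f μ →
      eLpNorm (fun x => ‖w x‖ * ‖f x‖) r μ ≤ eLpNorm w p μ * eLpNorm f q μ := fun hw hf => by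
    simpa using eLpNorm_le_eLpNorm_mul_eLpNorm'_of_norm hw hf (fun a b => ‖a‖ * ‖b‖) 1
      (.of_forall fun x => by simp)
  calc eLpNorm g r μ ≤ eLpNorm (fun x => ‖w₁ x‖ * ‖f₁ x‖ + ‖w₂ x‖ * ‖f₂ x‖) r μ :=
        eLpNorm_mono_real hg
    _ ≤ eLpNorm (fun x => ‖w₁ x‖ * ‖f₁ x‖) r μ + eLpNorm (fun x => ‖w₂ x‖ * ‖f₂ x‖) r μ :=
        eLpNorm_add_le (hw₁.norm.mul hf₁.norm) (hw₂.norm.mul hf₂.norm) hr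
    _ ≤ _ := add_le_add (holder hw₁ hf₁) (holder hw₂ hf₂)

end Holder

theorem Real.rpow_neg_le_two_rpow_mul_one_add_rpow_neg {t s : ℝ} (ht : 1 ≤ t) (hs : 0 ≤ s) :
    t ^ (-s) ≤ 2 ^ s * (1 + t) ^ (-s) := by
  have ht0 : 0 < t := by linarith
  calc t ^ (-s) = 2 ^ s * (2 * t) ^ (-s) := by
        rw [Real.mul_rpow zero_le_two ht0.le, ← mul_assoc, ← Real.rpow_add two_pos,
          add_neg_cancel, Real.rpow_zero, one_mul]
    _ ≤ 2 ^ s * (1 + t) ^ (-s) := by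
        gcongr 2 ^ s * ?_
        exact Real.rpow_le_rpow_of_nonpos (by positivity) (by linarith) (neg_nonpos.mpr hs)

section Weights

variable {E : Type*} [NormedAddCommGroup E] [NormedSpace ℝ E] [FiniteDimensional ℝ E]
  [MeasurableSpace E] [BorelSpace E] (μ : Measure E) [μ.IsAddHaarMeasure]

theorem integrableOn_compl_closedBall_norm_rpow_neg {s : ℝ} (hs : finrank ℝ E < s) :
    IntegrableOn (fun x : E => ‖x‖ ^ (-s)) (closedBall 0 1)ᶜ μ := by
  have hs0 : 0 ≤ s := (Nat.cast_nonneg _).trans hs.le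
  refine ((integrable_one_add_norm hs).const_mul (2 ^ s)).integrableOn.mono'
    (measurable_norm.pow_const _).aestronglyMeasurable
    ((ae_restrict_mem measurableSet_closedBall.compl).mono fun x hx => ?_)
  have hx1 : 1 ≤ ‖x‖ := by
    simp only [mem_compl_iff, mem_closedBall_zero_iff, not_le] at hx
    exact hx.le
  rw [Real.norm_of_nonneg (by positivity)]
  exact Real.rpow_neg_le_two_rpow_mul_one_add_rpow_neg hx1 hs0

theorem memLp_indicator_compl_closedBall_norm_rpow_neg {s q : ℝ} (hq : 0 < q)
    (hsq : finrank ℝ E < s * q) :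
    MemLp ((closedBall (0 : E) 1)ᶜ.indicator fun x => ‖x‖ ^ (-s)) (ENNReal.ofReal q) μ := by
  rw [memLp_indicator_iff_restrict measurableSet_closedBall.compl,
    ← integrable_norm_rpow_iff (measurable_norm.pow_const _).aestronglyMeasurable
      (by simpa using hq) ENNReal.ofReal_ne_top,
    ENNReal.toReal_ofReal hq.le]
  refine (integrableOn_compl_closedBall_norm_rpow_neg μ hsq).congr (.of_forall fun x => ?_)
  simp only [Real.norm_of_nonneg (by positivity : 0 ≤ ‖x‖ ^ (-s)),
    ← Real.rpow_mul (norm_nonneg x), neg_mul]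

end Weights

theorem norm_pow_sub_smul_le_indicator {E V : Type*} [NormedAddCommGroup E]
    [NormedAddCommGroup V] [NormedSpace ℝ V] {m j : ℕ} (hjm : j ≤ m) (x : E) (v : V) :
    ‖‖x‖ ^ (m - j) • v‖ ≤ ‖(closedBall (0 : E) 1).indicator (fun _ => (1 : ℝ)) x‖ * ‖v‖ +
      ‖(closedBall (0 : E) 1)ᶜ.indicator (fun x => ‖x‖ ^ (-(j : ℝ))) x‖ * ‖‖x‖ ^ m • v‖ := by
  by_cases hx : ‖x‖ ≤ 1
  · have hxB : x ∈ closedBall (0 : E) 1 := mem_closedBall_zero_iff.mpr hx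
    simp only [indicator_of_mem hxB, indicator_of_notMem (notMem_compl_iff.mpr hxB), norm_smul,
      norm_pow, norm_norm, norm_one, one_mul, norm_zero, zero_mul, add_zero]
    exact mul_le_of_le_one_left (norm_nonneg v) (pow_le_one₀ (norm_nonneg x) hx)
  · have hxB : x ∉ closedBall (0 : E) 1 := by simpa using hx
    have hx0 : 0 < ‖x‖ := by linarith
    rw [indicator_of_notMem hxB, indicator_of_mem (mem_compl hxB)]
    simp only [norm_smul, norm_pow, norm_norm, norm_zero, zero_mul, zero_add]
    rw [Real.norm_of_nonneg (by positivity), Real.rpow_neg hx0.le, Real.rpow_natCast,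
      pow_sub₀ _ hx0.ne' hjm]
    exact le_of_eq (by ring)

theorem natCast_lt_mul_two_mul_div_sub_two {n j : ℕ} {p : ℝ} (hj : 1 ≤ j) (hp : 2 < p)
    (hpn : 2 * j < n → p < 2 * n / (n - 2 * j)) : (n : ℝ) < j * (2 * p / (p - 2)) := by
  rw [mul_div_assoc', lt_div_iff₀ (by linarith)]
  rcases lt_or_ge (2 * j) n with h | h
  · have h' : (0 : ℝ) < n - 2 * j := by
      rw [sub_pos]; exact_mod_cast h
    have := (lt_div_iff₀ h').mp (hpn h)
    linarith
  · have : (n : ℝ) ≤ 2 * j := by exact_mod_cast h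
    have : (1 : ℝ) ≤ j := by exact_mod_cast hj
    nlinarith

theorem Real.HolderConjugate.holderTriple_two_mul_div_sub_two {p p' : ℝ}
    (h : p.HolderConjugate p') (hp : 2 < p) : (2 * p / (p - 2)).HolderTriple 2 p' where
  inv_add_inv_eq_inv := by
    rw [← h.one_sub_inv, inv_div]
    field_simp
    ring
  left_pos := div_pos (by linarith) (by linarith)
  right_pos := two_pos

theorem weighted_holder_bound_general (n j : ℕ) (p p' : ℝ)
    (hj1 : 1 ≤ j) (hjm : j ≤ n / 2 + 1)
    (hp2 : 2 < p) (hpn : 2 * j < n → p < 2 * n / (n - 2 * j))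
    (hp' : 1 / p + 1 / p' = 1) :
    ∃ C : ℝ, 0 < C ∧
      ∀ f : EuclideanSpace ℝ (Fin n) → ℂ,
        MemLp f 2 volume →
        MemLp (fun x => ‖x‖ ^ (n / 2 + 1) • f x) 2 volume →
        eLpNorm (fun x => ‖x‖ ^ (n / 2 + 1 - j) • f x) (ENNReal.ofReal p') volume
          ≤ ENNReal.ofReal C *
            (eLpNorm f 2 volume +
              eLpNorm (fun x => ‖x‖ ^ (n / 2 + 1) • f x) 2 volume) := by
  have hpp' : p.HolderConjugate p' :=
    Real.holderConjugate_iff.mpr ⟨by linarith, by simpa using hp'⟩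
  set q := 2 * p / (p - 2)
  have hq := hpp'.holderTriple_two_mul_div_sub_two hp2
  have : ENNReal.HolderTriple (ENNReal.ofReal q) 2 (ENNReal.ofReal p') := by
    simpa using hq.ennrealOfReal
  set B := closedBall (0 : EuclideanSpace ℝ (Fin n)) 1
  have hw₁ : MemLp (B.indicator fun _ => (1 : ℝ)) (ENNReal.ofReal q) volume :=
    memLp_indicator_const _ measurableSet_closedBall 1 (Or.inr measure_closedBall_lt_top.ne)
  have hw₂ : MemLp (Bᶜ.indicator fun x => ‖x‖ ^ (-(j : ℝ))) (ENNReal.ofReal q) volume :=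
    memLp_indicator_compl_closedBall_norm_rpow_neg volume hq.pos
      (by simpa using natCast_lt_mul_two_mul_div_sub_two hj1 hp2 hpn)
  obtain ⟨C, hC, hwC⟩ : ∃ C : ℝ, 0 < C ∧
      max (eLpNorm (B.indicator fun _ => (1 : ℝ)) (ENNReal.ofReal q) volume)
        (eLpNorm (Bᶜ.indicator fun x => ‖x‖ ^ (-(j : ℝ))) (ENNReal.ofReal q) volume)
        ≤ ENNReal.ofReal C :=
    ⟨_ + 1, by positivity, (ENNReal.le_ofReal_iff_toReal_le (max_ne_top hw₁.eLpNorm_ne_top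
      hw₂.eLpNorm_ne_top) (by positivity)).mpr (le_add_of_nonneg_right zero_le_one)⟩
  refine ⟨C, hC, fun f hf hmf => ?_⟩
  calc _ ≤ _ := eLpNorm_le_mul_add_mul_of_norm_le (ENNReal.one_le_ofReal.mpr hpp'.symm.lt.le)
        hw₁.1 hw₂.1 hf.1 hmf.1 fun x => norm_pow_sub_smul_le_indicator hjm x (f x)
    _ ≤ _ := by
      rw [mul_add]
      gcongr
      exacts [(le_max_left _ _).trans hwC, (le_max_right _ _).trans hwC]

theorem weighted_holder_bound (n j : ℕ) (p p' : ℝ)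
    (hn : 1 ≤ n) (hj1 : 1 ≤ j) (hjm : j ≤ n / 2 + 1)
    (hp2 : 2 < p) (hpn : 2 * j < n → p < 2 * n / (n - 2 * j))
    (hp' : 1 / p + 1 / p' = 1) :
    ∃ C : ℝ, 0 < C ∧
      ∀ f : EuclideanSpace ℝ (Fin n) → ℂ,
        MemLp f 2 volume →
        MemLp (fun x => ‖x‖ ^ (n / 2 + 1) • f x) 2 volume →
        eLpNorm (fun x => ‖x‖ ^ (n / 2 + 1 - j) • f x) (ENNReal.ofReal p') volume
          ≤ ENNReal.ofReal C *
            (eLpNorm f 2 volume +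
              eLpNorm (fun x => ‖x‖ ^ (n / 2 + 1) • f x) 2 volume) :=
  weighted_holder_bound_general n j p p' hj1 hjm hp2 hpn hp'
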